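/- Let Q_1, Q_2, W_1, W_2 be real numbers with min(Q_1, Q_2, W_1, W_2) = 0 and Q_1 + Q_2 < W_1 + W_2. Set C_0 = Q_1 + Q_2, C_{−1} = Q_1 + Q_2 + W_1 + W_2, and assume C_0 > 0 and C_{−1} > 2·C_0. Define X = min(Q_2, W_1) and Y = Q_1 + W_1. Then the original data are recovered from (X,Y) by the formulas: Q_1 = min(C_0, Y) − X; Q_2 = X + min(C_{−1}, C_0 + Y) − min(C_{−1}, C_0 + Y, 2Y); W_1 = Y − Q_1; and W_2 = C_{−1} − Y − Q_2. In particular the ultra-discrete eigenvector map ψ : (Q_1,Q_2,W_1,W_2) ↦ (X,Y) is injective on this set. -/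
import Mathlib

private lemma ud_key (Q1 Q2 W1 W2 : ℝ) (hlt : Q1 + Q2 < W1 + W2) :
    Q1 = min (Q1 + Q2) (Q1 + W1) - min Q2 W1 ∧
    Q2 = min Q2 W1 + min (Q1 + Q2 + W1 + W2) ((Q1 + Q2) + (Q1 + W1)) -
      min (min (Q1 + Q2 + W1 + W2) ((Q1 + Q2) + (Q1 + W1))) (2 * (Q1 + W1)) := by
  rcases le_total Q2 W1 with h1 | h1 <;>
    rcases le_total (Q1 + Q2 + W1 + W2) ((Q1 + Q2) + (Q1 + W1)) with h2 | h2 <;>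
    simp only [min_def] <;> split_ifs <;> constructor <;> linarith

/-- For `g = 1`, the ultra-discrete eigenvector map
`(Q_1,Q_2,W_1,W_2) ↦ (X,Y) = (min(Q_2,W_1), Q_1+W_1)` is inverted by the
displayed formulas; in particular it is injective on the isolevel set. -/
theorem ud_eigenvector_map_g1_inverse (Q1 Q2 W1 W2 C0 Cm1 X Y : ℝ)
    (hmin : min (min Q1 Q2) (min W1 W2) = 0)
    (hlt : Q1 + Q2 < W1 + W2)
    (hC0 : C0 = Q1 + Q2) (hCm1 : Cm1 = Q1 + Q2 + W1 + W2)
    (hC0pos : 0 < C0) (hgen : Cm1 > 2 * C0)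
    (hX : X = min Q2 W1) (hY : Y = Q1 + W1) :
    (Q1 = min C0 Y - X ∧
     Q2 = X + min Cm1 (C0 + Y) - min (min Cm1 (C0 + Y)) (2 * Y) ∧
     W1 = Y - Q1 ∧
     W2 = Cm1 - Y - Q2) ∧
    (∀ Q1' Q2' W1' W2' : ℝ,
      min (min Q1' Q2') (min W1' W2') = 0 →
      Q1' + Q2' < W1' + W2' →
      Q1' + Q2' = C0 →
      Q1' + Q2' + W1' + W2' = Cm1 →
      min Q2' W1' = X →
      Q1' + W1' = Y →
      Q1' = Q1 ∧ Q2' = Q2 ∧ W1' = W1 ∧ W2' = W2) := by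
  obtain ⟨k1, k2⟩ := ud_key Q1 Q2 W1 W2 hlt
  subst hC0 hCm1 hX hY
  refine ⟨⟨k1, k2, by linarith [k1], by linarith [k1, k2]⟩, ?_⟩
  intro Q1' Q2' W1' W2' _ hlt' hc0 hcm1 hx hy
  obtain ⟨k1', k2'⟩ := ud_key Q1' Q2' W1' W2' hlt'
  rw [hc0, hy] at k1'
  rw [hcm1, hc0, hx, hy] at k2'
  rw [hx] at k1'
  have e1 : Q1' = Q1 := k1'.trans k1.symm
  have e3 : W1' = W1 := by linarith
  have e2 : Q2' = Q2 := k2'.trans k2.symm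
  exact ⟨e1, e2, e3, by linarith⟩
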